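/- arXiv:2205.05736 — 4 statements merged into one kernel-verified Lean document; each statement's English description precedes it below -/
import Mathlib

section
/- Let (T_{hk})_{h,k∈ℕ} be an infinite matrix with |T_{hk}| ≤ 1 for all h, k and whose entries depend only on h − k (Toeplitz structure: T_{hk} = T_{h'k'} whenever h − k = h' − k'). Fix h, k ∈ ℕ and let d ≥ max{h, k} + 1. Then | T_{hk} − (1/d) Σ_{x=0}^{d-1} T_{h⊕x, k⊕x} | ≤ 2|h − k| / d, where ⊕ denotes addition modulo d. In particular, for every fixed h, k, the average (1/d) Σ_{x=0}^{d-1} T_{h⊕x, k⊕x} converges to T_{hk} as d → ∞. -/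
open Filter Finset

/-!
Shifting both indices by `x` and reducing mod `d` preserves `h - k`, hence the Toeplitz entry,
unless exactly one of `h + x`, `k + x` wraps around, i.e. unless
`d - max h k ≤ x < d - min h k`. Only these `|h - k|` terms of the average can differ from
`T h k`, each by at most `2`.
-/

theorem norm_sub_mul_sum_le_of_eq_off {ι 𝕜 : Type*} [RCLike 𝕜] {s B : Finset ι} {f : ι → 𝕜}
    {c : 𝕜} {M : ℝ} (hs : s.Nonempty) (hBs : B ⊆ s) (hoff : ∀ x ∈ s, x ∉ B → f x = c)
    (hM : ∀ x ∈ B, ‖c - f x‖ ≤ M) :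
    ‖c - (1 / (#s : 𝕜)) * ∑ x ∈ s, f x‖ ≤ M * #B / #s := by
  replace hs : (#s : 𝕜) ≠ 0 := by exact_mod_cast hs.card_ne_zero
  have hsum : c - (1 / (#s : 𝕜)) * ∑ x ∈ s, f x = (1 / (#s : 𝕜)) * ∑ x ∈ B, (c - f x) := by
    rw [sum_subset hBs fun x hx hxB => by rw [hoff x hx hxB, sub_self], sum_sub_distrib,
      sum_const, nsmul_eq_mul]
    field_simp
  calc ‖c - (1 / (#s : 𝕜)) * ∑ x ∈ s, f x‖
      = ‖∑ x ∈ B, (c - f x)‖ / #s := by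
        rw [hsum, norm_mul, norm_div, norm_one, RCLike.norm_natCast, one_div_mul_eq_div]
    _ ≤ (∑ _x ∈ B, M) / #s := by gcongr; exact norm_sum_le_of_le B hM
    _ = M * #B / #s := by rw [sum_const, nsmul_eq_mul, mul_comm]

theorem add_mod_add_eq_of_notMem_Ico {h k d x : ℕ} (hd : max h k < d) (hx : x < d)
    (hxB : x ∉ Ico (d - max h k) (d - min h k)) :
    (h + x) % d + k = (k + x) % d + h := by
  rw [mem_Ico, not_and_or, not_le, not_lt] at hxB
  rcases hxB with hnowrap | hwrap
  · rw [Nat.mod_eq_of_lt (by omega), Nat.mod_eq_of_lt (by omega)]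
    omega
  · rw [Nat.mod_eq_sub_mod (a := h + x) (by omega), Nat.mod_eq_sub_mod (a := k + x) (by omega),
      Nat.mod_eq_of_lt (a := h + x - d) (by omega), Nat.mod_eq_of_lt (a := k + x - d) (by omega)]
    omega

section Toeplitz

variable {𝕜 : Type*} [RCLike 𝕜]

def cyclicAverage (T : ℕ → ℕ → 𝕜) (d h k : ℕ) : 𝕜 :=
  (1 / (d : 𝕜)) * ∑ x ∈ range d, T ((h + x) % d) ((k + x) % d)

variable {T : ℕ → ℕ → 𝕜}
  (hToeplitz : ∀ h k h' k' : ℕ, (h : ℤ) - (k : ℤ) = (h' : ℤ) - (k' : ℤ) → T h k = T h' k')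
  {M : ℝ} (hBound : ∀ h k : ℕ, ‖T h k‖ ≤ M)
include hToeplitz hBound

theorem norm_sub_cyclicAverage_le {h k d : ℕ} (hd : max h k < d) :
    ‖T h k - cyclicAverage T d h k‖ ≤ 2 * M * |(h : ℝ) - k| / d := by
  have hBad := norm_sub_mul_sum_le_of_eq_off (M := 2 * M) (c := T h k)
    (f := fun x => T ((h + x) % d) ((k + x) % d))
    (s := range d) (B := Ico (d - max h k) (d - min h k)) (nonempty_range_iff.2 (by omega))
    (fun x hx => by simp only [mem_Ico, mem_range] at hx ⊢; omega)
    (fun x hx hxB => (hToeplitz _ _ _ _ (by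
      have := add_mod_add_eq_of_notMem_Ico hd (mem_range.1 hx) hxB; omega)).symm)
    (fun x _ => (norm_sub_le _ _).trans
      (by linarith [hBound h k, hBound ((h + x) % d) ((k + x) % d)]))
  have hcard : (#(Ico (d - max h k) (d - min h k)) : ℝ) = |(h : ℝ) - k| := by
    rw [Nat.card_Ico, show d - min h k - (d - max h k) = max h k - min h k by omega,
      Nat.cast_sub min_le_max, Nat.cast_max, Nat.cast_min, max_sub_min_eq_abs, abs_sub_comm]
  rwa [card_range, hcard] at hBad

theorem tendsto_cyclicAverage (h k : ℕ) :
    Tendsto (fun d => cyclicAverage T d h k) atTop (nhds (T h k)) := by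
  rw [tendsto_iff_norm_sub_tendsto_zero]
  refine squeeze_zero' (Eventually.of_forall fun _ => norm_nonneg _) ?_
    (tendsto_const_div_atTop_nhds_zero_nat (2 * M * |(h : ℝ) - k|))
  filter_upwards [eventually_gt_atTop (max h k)] with d hd
  rw [norm_sub_rev]
  exact norm_sub_cyclicAverage_le hToeplitz hBound hd

end Toeplitz

/-- For an infinite Toeplitz matrix `T` with entries of modulus at most `1`
depending only on `h − k`, and fixed indices `h, k`, the cyclically averaged entry
`(1/d) Σ_{x<d} T_{h⊕x, k⊕x}` (with `⊕` addition mod `d`) differs from `T_{hk}` by at most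
`2|h−k|/d` whenever `d ≥ max{h,k} + 1`; in particular it converges to `T_{hk}` as `d → ∞`. -/
theorem toeplitz_cyclic_average_bound
    (T : ℕ → ℕ → ℂ)
    (hToeplitz : ∀ h k h' k' : ℕ, (h : ℤ) - (k : ℤ) = (h' : ℤ) - (k' : ℤ) → T h k = T h' k')
    (hBound : ∀ h k : ℕ, ‖T h k‖ ≤ 1)
    (h k : ℕ) :
    (∀ d : ℕ, max h k + 1 ≤ d →
      ‖T h k -
          (1 / (d : ℂ)) * ∑ x ∈ Finset.range d, T ((h + x) % d) ((k + x) % d)‖ ≤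
        2 * |(h : ℝ) - (k : ℝ)| / (d : ℝ)) ∧
    Tendsto (fun d : ℕ =>
        (1 / (d : ℂ)) * ∑ x ∈ Finset.range d, T ((h + x) % d) ((k + x) % d))
      atTop (nhds (T h k)) :=
  ⟨fun _ hd => by simpa [cyclicAverage] using norm_sub_cyclicAverage_le hToeplitz hBound hd,
    tendsto_cyclicAverage hToeplitz hBound h k⟩
end

section
/- Let m ∈ ℕ₊ and let (T_{𝐡,𝐤})_{𝐡,𝐤∈ℕᵐ} be an infinite multi-index matrix with |T_{𝐡,𝐤}| ≤ 1 for all multi-indices 𝐡, 𝐤 ∈ ℕᵐ, whose entries depend only on 𝐡 − 𝐤 (multi-index Toeplitz structure). Fix 𝐡, 𝐤 ∈ ℕᵐ and 𝐝 = (d₁, …, d_m) with d_j ≥ max{h_j, k_j} + 1 for each j, and set D(𝐝) = ∏_{j=1}^m d_j. Then | T_{𝐡,𝐤} − (1/D(𝐝)) Σ_{x₁=0}^{d₁−1} ⋯ Σ_{x_m=0}^{d_m−1} T_{𝐡⊕𝐱, 𝐤⊕𝐱} | ≤ 2 ( D(𝐝) − ∏_{j=1}^m (d_j − |h_j − k_j|)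 ) / D(𝐝), where 𝐡 ⊕ 𝐱 denotes componentwise addition with the j-th component taken modulo d_j. In particular the left-hand side tends to 0 as min_j d_j → ∞. -/
/-!
Shifting both multi-indices by `x` cyclically preserves `h_j - k_j` unless exactly one of
`h_j + x_j`, `k_j + x_j` wraps around `d_j`, which happens for exactly `|h_j - k_j|` values
of `x_j`. Hence all but `D(𝐝) - ∏_j (d_j - |h_j - k_j|)` of the averaged entries equal
`T_{𝐡,𝐤}`, and each of the others differs from it by at most `2`. The bound tends to `0`
because `∏_j (1 - |h_j - k_j| / d_j) → 1`.
-/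

open Filter Finset Topology

theorem norm_sub_average_le {ι 𝕜 : Type*} [Fintype ι] [DecidableEq ι] [Nonempty ι] [RCLike 𝕜]
    (f : ι → 𝕜) (c : 𝕜) (S : Finset ι) (hS : ∀ x ∈ S, f x = c)
    (hf : ∀ x, ‖f x‖ ≤ 1) (hc : ‖c‖ ≤ 1) :
    ‖c - (1 / (Fintype.card ι : 𝕜)) * ∑ x, f x‖ ≤ 2 * #Sᶜ / Fintype.card ι := by
  have hN : (Fintype.card ι : 𝕜) ≠ 0 := Nat.cast_ne_zero.mpr Fintype.card_ne_zero
  have hmean : c - (1 / (Fintype.card ι : 𝕜)) * ∑ x, f x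
      = (1 / (Fintype.card ι : 𝕜)) * ∑ x, (c - f x) := by
    rw [sum_sub_distrib, sum_const, card_univ, nsmul_eq_mul]
    field_simp
  have hcompl : ∑ x, (c - f x) = ∑ x ∈ Sᶜ, (c - f x) :=
    (sum_subset (subset_univ _) fun x _ hx => by simp [hS x (by simpa using hx)]).symm
  have hterm : ∀ x, ‖c - f x‖ ≤ 2 := fun x =>
    (norm_sub_le _ _).trans (by linarith [hf x])
  rw [hmean, hcompl, norm_mul, norm_div, norm_one, RCLike.norm_natCast, one_div_mul_eq_div]
  gcongr
  simpa [mul_comm] using (norm_sum_le _ _).trans (sum_le_card_nsmul _ _ _ fun x _ => hterm x)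

theorem Nat.cast_add_mod_sub_cast_add_mod {a b x d : ℕ} (ha : a < d) (hb : b < d) (hx : x < d)
    (hwrap : a + x < d ↔ b + x < d) :
    (((a + x) % d : ℕ) : ℤ) - ((b + x) % d : ℕ) = a - b := by
  by_cases hax : a + x < d
  · rw [Nat.mod_eq_of_lt hax, Nat.mod_eq_of_lt (hwrap.mp hax)]
    push_cast
    ring
  · rw [Nat.mod_eq_sub_mod (by omega), Nat.mod_eq_of_lt (by omega),
      Nat.mod_eq_sub_mod (by omega), Nat.mod_eq_of_lt (by omega)]
    omega

theorem card_filter_add_lt_iff {a b d : ℕ} (ha : a ≤ d) (hb : b ≤ d) :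
    (#{x : Fin d | a + x < d ↔ b + x < d} : ℝ) = d - |(a : ℝ) - b| := by
  have hrange : #{x : Fin d | a + x < d ↔ b + x < d}
      = #((range d).filter fun x => a + x < d ↔ b + x < d) := by
    rw [card_filter, card_filter]
    exact Fin.sum_univ_eq_sum_range (fun x => if a + x < d ↔ b + x < d then 1 else 0) d
  have hsplit : (range d).filter (fun x => a + x < d ↔ b + x < d)
      = range (d - max a b) ∪ Ico (d - min a b) d := by
    ext x
    simp only [mem_filter, mem_range, mem_union, mem_Ico]
    omega
  have hdisj : Disjoint (range (d - max a b)) (Ico (d - min a b) d) := by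
    simp only [disjoint_left, mem_range, mem_Ico]
    omega
  rw [hrange, hsplit, card_union_of_disjoint hdisj, card_range, Nat.card_Ico,
    show d - max a b + (d - (d - min a b)) = d - (max a b - min a b) by omega,
    Nat.cast_sub (by omega), Nat.cast_sub min_le_max, Nat.cast_max, Nat.cast_min,
    max_sub_min_eq_abs']

theorem norm_sub_cyclic_average_le {ι : Type*} [Fintype ι] [DecidableEq ι]
    (T : (ι → ℕ) → (ι → ℕ) → ℂ)
    (hToeplitz : ∀ h k h' k' : ι → ℕ,
      (∀ j, (h j : ℤ) - (k j : ℤ) = (h' j : ℤ) - (k' j : ℤ)) → T h k = T h' k')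
    (hBound : ∀ h k : ι → ℕ, ‖T h k‖ ≤ 1)
    (h k d : ι → ℕ) (hd : ∀ j, max (h j) (k j) + 1 ≤ d j) :
    ‖T h k -
        (1 / ((∏ j, d j : ℕ) : ℂ)) * ∑ x : (j : ι) → Fin (d j),
          T (fun j => (h j + (x j : ℕ)) % d j) (fun j => (k j + (x j : ℕ)) % d j)‖ ≤
      2 * (((∏ j, d j : ℕ) : ℝ) - ∏ j, ((d j : ℝ) - |(h j : ℝ) - (k j : ℝ)|)) /
        ((∏ j, d j : ℕ) : ℝ) := by
  have : Nonempty ((j : ι) → Fin (d j)) := ⟨fun j => ⟨0, by have := hd j; omega⟩⟩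
  have hcard : Fintype.card ((j : ι) → Fin (d j)) = ∏ j, d j := by simp
  set S := Fintype.piFinset fun j => ({x : Fin (d j) | h j + x < d j ↔ k j + x < d j} : Finset _)
  have hgood : ∀ x ∈ S,
      T (fun j => (h j + (x j : ℕ)) % d j) (fun j => (k j + (x j : ℕ)) % d j) = T h k :=
    fun x hx => hToeplitz _ _ _ _ fun j => by
      have hxj := Fintype.mem_piFinset.mp hx j
      rw [mem_filter] at hxj
      have := hd j
      exact Nat.cast_add_mod_sub_cast_add_mod (by omega) (by omega) (x j).isLt hxj.2
  have hbad : (#Sᶜ : ℝ) = ((∏ j, d j : ℕ) : ℝ) - ∏ j, ((d j : ℝ) - |(h j : ℝ) - (k j : ℝ)|) := by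
    rw [card_compl, hcard, Nat.cast_sub (hcard ▸ card_le_univ S), Fintype.card_piFinset]
    congr 1
    rw [Nat.cast_prod]
    exact prod_congr rfl fun j _ => by
      have := hd j
      exact card_filter_add_lt_iff (by omega) (by omega)
  have := norm_sub_average_le _ (T h k) S hgood (fun _ => hBound _ _) (hBound h k)
  rwa [hcard, hbad] at this

theorem tendsto_natCast_sub_div_self_atTop (c : ℝ) :
    Tendsto (fun n : ℕ => ((n : ℝ) - c) / n) atTop (𝓝 1) := by
  have hlim : Tendsto (fun n : ℕ => 1 - c / n) atTop (𝓝 1) := by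
    simpa using (tendsto_const_div_atTop_nhds_zero_nat c).const_sub 1
  refine hlim.congr' ?_
  filter_upwards [eventually_ne_atTop 0] with n hn
  field_simp

theorem tendsto_prod_sub_prod_div_prod_atTop {ι : Type*} [Fintype ι] (c : ι → ℝ) :
    Tendsto (fun d : ι → ℕ =>
      (((∏ j, d j : ℕ) : ℝ) - ∏ j, ((d j : ℝ) - c j)) / ((∏ j, d j : ℕ) : ℝ)) atTop (𝓝 0) := by
  have hfactor : ∀ j, Tendsto (fun d : ι → ℕ => ((d j : ℝ) - c j) / d j) atTop (𝓝 1) :=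
    fun j => (tendsto_natCast_sub_div_self_atTop (c j)).comp
      (tendsto_atTop_atTop_of_monotone (Function.monotone_eval j) fun n => ⟨fun _ => n, le_rfl⟩)
  have hprod : Tendsto (fun d : ι → ℕ => ∏ j, ((d j : ℝ) - c j) / d j) atTop (𝓝 1) := by
    simpa using tendsto_finsetProd univ fun j _ => hfactor j
  have hlim := hprod.const_sub 1
  rw [sub_self] at hlim
  refine hlim.congr' ?_
  filter_upwards [eventually_ge_atTop 1] with d hd
  have hne : ∀ j, (d j : ℝ) ≠ 0 := fun j => Nat.cast_ne_zero.mpr (Nat.one_le_iff_ne_zero.mp (hd j))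
  rw [Nat.cast_prod, prod_div_distrib, one_sub_div (prod_ne_zero_iff.mpr fun j _ => hne j)]

theorem multiindex_toeplitz_cyclic_average_bound_general
    (m : ℕ)
    (T : (Fin m → ℕ) → (Fin m → ℕ) → ℂ)
    (hToeplitz : ∀ h k h' k' : Fin m → ℕ,
      (∀ j, (h j : ℤ) - (k j : ℤ) = (h' j : ℤ) - (k' j : ℤ)) → T h k = T h' k')
    (hBound : ∀ h k : Fin m → ℕ, ‖T h k‖ ≤ 1)
    (h k : Fin m → ℕ) :
    (∀ d : Fin m → ℕ, (∀ j, max (h j) (k j) + 1 ≤ d j) →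
      ‖T h k -
          (1 / ((∏ j, d j : ℕ) : ℂ)) * ∑ x : (j : Fin m) → Fin (d j),
            T (fun j => (h j + (x j : ℕ)) % d j) (fun j => (k j + (x j : ℕ)) % d j)‖ ≤
        2 * (((∏ j, d j : ℕ) : ℝ) - ∏ j, ((d j : ℝ) - |(h j : ℝ) - (k j : ℝ)|)) /
          ((∏ j, d j : ℕ) : ℝ)) ∧
    Tendsto (fun d : Fin m → ℕ =>
        ‖T h k -
          (1 / ((∏ j, d j : ℕ) : ℂ)) * ∑ x : (j : Fin m) → Fin (d j),
            T (fun j => (h j + (x j : ℕ)) % d j) (fun j => (k j + (x j : ℕ)) % d j)‖)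
      atTop (nhds 0) := by
  have hbound := norm_sub_cyclic_average_le T hToeplitz hBound h k
  refine ⟨hbound, ?_⟩
  have hrhs := (tendsto_prod_sub_prod_div_prod_atTop
    fun j => |(h j : ℝ) - (k j : ℝ)|).const_mul 2
  rw [mul_zero] at hrhs
  refine squeeze_zero' (Eventually.of_forall fun _ => norm_nonneg _) ?_ hrhs
  filter_upwards [eventually_ge_atTop fun j => max (h j) (k j) + 1] with d hd
  rw [← mul_div_assoc]
  exact hbound d hd

/-- multi-index version of the cyclic averaging bound. For an infinite
multi-index Toeplitz matrix `T` on `ℕᵐ` with entries of modulus at most `1` depending only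
on `𝐡 − 𝐤`, and fixed multi-indices `𝐡, 𝐤`, the cyclically averaged entry over
`𝐱 ∈ ∏_j {0,…,d_j−1}` differs from `T_{𝐡,𝐤}` by at most
`2(D(𝐝) − ∏_j (d_j − |h_j − k_j|))/D(𝐝)` whenever `d_j ≥ max{h_j,k_j} + 1` for all `j`;
in particular the difference tends to `0` as `min_j d_j → ∞`. -/
theorem multiindex_toeplitz_cyclic_average_bound
    (m : ℕ) (hm : 0 < m)
    (T : (Fin m → ℕ) → (Fin m → ℕ) → ℂ)
    (hToeplitz : ∀ h k h' k' : Fin m → ℕ,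
      (∀ j, (h j : ℤ) - (k j : ℤ) = (h' j : ℤ) - (k' j : ℤ)) → T h k = T h' k')
    (hBound : ∀ h k : Fin m → ℕ, ‖T h k‖ ≤ 1)
    (h k : Fin m → ℕ) :
    (∀ d : Fin m → ℕ, (∀ j, max (h j) (k j) + 1 ≤ d j) →
      ‖T h k -
          (1 / ((∏ j, d j : ℕ) : ℂ)) * ∑ x : (j : Fin m) → Fin (d j),
            T (fun j => (h j + (x j : ℕ)) % d j) (fun j => (k j + (x j : ℕ)) % d j)‖ ≤
        2 * (((∏ j, d j : ℕ) : ℝ) - ∏ j, ((d j : ℝ) - |(h j : ℝ) - (k j : ℝ)|)) /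
          ((∏ j, d j : ℕ) : ℝ)) ∧
    Tendsto (fun d : Fin m → ℕ =>
        ‖T h k -
          (1 / ((∏ j, d j : ℕ) : ℂ)) * ∑ x : (j : Fin m) → Fin (d j),
            T (fun j => (h j + (x j : ℕ)) % d j) (fun j => (k j + (x j : ℕ)) % d j)‖)
      atTop (nhds 0) :=
  multiindex_toeplitz_cyclic_average_bound_general m T hToeplitz hBound h k
end

section
/- Let κ > 0 and let p_κ(φ) = (1/2π) sinh(√κ)/(cosh(√κ) − cos φ) be the wrapped Cauchy density on [-π, π]. Then ∫_{-π}^{π} p_κ(φ) log₂(2π p_κ(φ)) dφ = −log₂(1 − e^{-2√κ}). Equivalently, the differential entropy of p_κ equals h(p_κ) = log₂( 2π (1 − e^{-2√κ}) ), and the Kullback–Leibler divergence from the uniform density u ≡ 1/(2π) satisfies D(p_κ‖u) = log₂( 1/(1 − e^{-2√κ}) ). -/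
open scoped Real
open MeasureTheory

/-!
With `r = exp (-√κ)`, `2π p_κ(φ)` is the Poisson kernel `P` of the unit disc for the point `r`,
evaluated at `e^{iφ}`. On the unit circle `log P(z) = log (1 - r²) - 2 log |1 - r z|`, the boundary
value of a function harmonic near the closed disc, so the Poisson integral formula gives
`⨍ P log P = log (1 - r²) - 2 log (1 - r²) = -log (1 - r²)`; applied to the constant `1` it gives
`⨍ P = 1`, and the entropy is then read off from `log₂ p = log₂ (2π p) - log₂ (2π)`.
-/

section PoissonKernel

open Complex ComplexConjugate Metric InnerProductSpace
open Real (circleAverage circleAverage_congr_sphere circleAverage_eq_integral_add)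

theorem norm_sub_eq_norm_one_sub_conj_mul {z : ℂ} (hz : ‖z‖ = 1) (w : ℂ) :
    ‖z - w‖ = ‖1 - conj w * z‖ := by
  have : 1 - conj w * z = conj (z - w) * z := by
    rw [map_sub, sub_mul, conj_mul', hz]; push_cast; ring
  rw [this, norm_mul, hz, mul_one, RCLike.norm_conj]

theorem circleAverage_poissonKernel {c w : ℂ} {R : ℝ} (hw : w ∈ ball c R) :
    circleAverage (poissonKernel c w) c R = 1 := by
  have := (harmonicOnNhd_const (1 : ℝ)).circleAverage_poissonKernel_smul hw
  rwa [← Pi.one_def, smul_eq_mul, mul_one] at this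

theorem log_poissonKernel_zero_of_norm_eq_one {w z : ℂ} (hw : ‖w‖ < 1) (hz : ‖z‖ = 1) :
    Real.log (poissonKernel 0 w z) = Real.log (1 - ‖w‖ ^ 2) - 2 * Real.log ‖1 - conj w * z‖ := by
  have hzw : z - w ≠ 0 := by
    intro h; rw [sub_eq_zero.mp h] at hz; linarith
  have h1 : 0 < 1 - ‖w‖ ^ 2 := by nlinarith [norm_nonneg w]
  rw [poissonKernel_def, sub_zero, sub_zero, hz, one_pow,
    Real.log_div h1.ne' (by positivity), Real.log_pow, norm_sub_eq_norm_one_sub_conj_mul hz]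
  push_cast; ring

theorem harmonicOnNhd_log_norm_one_sub_conj_mul {w : ℂ} (hw : ‖w‖ < 1) :
    HarmonicOnNhd (fun z => Real.log ‖1 - conj w * z‖) (closedBall 0 1) := by
  intro z hz
  refine AnalyticAt.harmonicAt_log_norm (by fun_prop) fun h => ?_
  have : ‖conj w * z‖ < 1 := by
    rw [norm_mul, RCLike.norm_conj]
    nlinarith [norm_nonneg w, norm_nonneg z, mem_closedBall_zero_iff.mp hz]
  rw [← sub_eq_zero.mp h, norm_one] at this
  exact lt_irrefl _ this

theorem circleAverage_poissonKernel_mul_log {w : ℂ} (hw : ‖w‖ < 1) :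
    circleAverage (fun z => poissonKernel 0 w z * Real.log (poissonKernel 0 w z)) 0 1 =
      -Real.log (1 - ‖w‖ ^ 2) := by
  have hf : HarmonicOnNhd (fun z => Real.log (1 - ‖w‖ ^ 2) - 2 * Real.log ‖1 - conj w * z‖)
      (closedBall 0 1) := fun z hz =>
    (harmonicAt_const _).sub
      ((harmonicOnNhd_log_norm_one_sub_conj_mul hw z hz).const_smul (c := (2 : ℝ)))
  have hpoisson := hf.circleAverage_poissonKernel_smul (mem_ball_zero_iff.mpr hw)
  have h1 : 0 < 1 - ‖w‖ ^ 2 := by nlinarith [norm_nonneg w]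
  have hfw : Real.log ‖1 - conj w * w‖ = Real.log (1 - ‖w‖ ^ 2) := by
    rw [conj_mul', ← ofReal_pow, ← ofReal_one, ← ofReal_sub, norm_real, Real.norm_of_nonneg h1.le]
  rw [hfw] at hpoisson
  rw [circleAverage_congr_sphere (f₂ := poissonKernel 0 w • fun z =>
    Real.log (1 - ‖w‖ ^ 2) - 2 * Real.log ‖1 - conj w * z‖), hpoisson]
  · ring
  intro z hz
  rw [abs_one, mem_sphere_zero_iff_norm] at hz
  simp only [Pi.smul_apply', smul_eq_mul, log_poissonKernel_zero_of_norm_eq_one hw hz]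

theorem integral_circleMap_eq_two_pi_smul_circleAverage {E : Type*} [NormedAddCommGroup E]
    [NormedSpace ℝ E] (f : ℂ → E) (c : ℂ) (R : ℝ) :
    ∫ θ in (-π)..π, f (circleMap c R θ) = (2 * π) • circleAverage f c R := by
  rw [circleAverage_eq_integral_add (-π), smul_inv_smul₀ (by positivity),
    intervalIntegral.integral_comp_add_right (fun θ => f (circleMap c R θ))]
  ring_nf

theorem poissonKernel_zero_ofReal_circleMap (r φ : ℝ) :
    poissonKernel 0 r (circleMap 0 1 φ) = (1 - r ^ 2) / (1 - 2 * r * Real.cos φ + r ^ 2) := by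
  have hsq : ‖circleMap 0 1 φ - r‖ ^ 2 = 1 - 2 * r * Real.cos φ + r ^ 2 := by
    rw [← normSq_eq_norm_sq, normSq_apply]
    simp only [circleMap_zero, ofReal_one, one_mul, sub_re, sub_im, exp_ofReal_mul_I_re,
      exp_ofReal_mul_I_im, ofReal_re, ofReal_im, sub_zero]
    nlinarith [Real.sin_sq_add_cos_sq φ]
  rw [poissonKernel_def, sub_zero, sub_zero, hsq, norm_circleMap_zero, norm_real,
    Real.norm_eq_abs, abs_one, sq_abs, one_pow]

theorem sinh_div_cosh_sub_cos_eq_poissonKernel (s φ : ℝ) :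
    Real.sinh s / (Real.cosh s - Real.cos φ) =
      poissonKernel 0 (Real.exp (-s) : ℂ) (circleMap 0 1 φ) := by
  have hr : Real.exp (-s) ≠ 0 := (Real.exp_pos _).ne'
  rw [poissonKernel_zero_ofReal_circleMap, Real.sinh_eq, Real.cosh_eq,
    show Real.exp s = (Real.exp (-s))⁻¹ by rw [Real.exp_neg, inv_inv]]
  field_simp
  ring_nf

theorem circleMap_zero_one_sub_ne_zero {w : ℂ} (hw : ‖w‖ < 1) (φ : ℝ) :
    circleMap 0 1 φ - w ≠ 0 := by
  intro h
  have := congrArg norm (sub_eq_zero.mp h)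
  rw [norm_circleMap_zero, abs_one] at this
  linarith

theorem poissonKernel_zero_circleMap_pos {w : ℂ} (hw : ‖w‖ < 1) (φ : ℝ) :
    0 < poissonKernel 0 w (circleMap 0 1 φ) := by
  have hne := circleMap_zero_one_sub_ne_zero hw φ
  have h1 : 0 < 1 - ‖w‖ ^ 2 := by nlinarith [norm_nonneg w]
  rw [poissonKernel_def, sub_zero, sub_zero, norm_circleMap_zero, abs_one, one_pow]
  positivity

theorem continuous_poissonKernel_zero_circleMap {w : ℂ} (hw : ‖w‖ < 1) :
    Continuous fun φ => poissonKernel 0 w (circleMap 0 1 φ) := by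
  simp only [poissonKernel_def, sub_zero]
  exact Continuous.div (by fun_prop) (by fun_prop) fun φ => by
    simpa using circleMap_zero_one_sub_ne_zero hw φ

end PoissonKernel

section Entropy

open Real

-- Also true at `x = 0`, where both sides vanish since `logb b 0 = 0`.
theorem mul_logb_const_mul {b c : ℝ} (hc : c ≠ 0) (x : ℝ) :
    x * logb b (c * x) = x * logb b c + x * logb b x := by
  rcases eq_or_ne x 0 with rfl | hx
  · simp
  · rw [logb_mul hc hx]; ring

theorem neg_integral_mul_logb_eq {g : ℝ → ℝ} {a a' b c : ℝ} (hc : c ≠ 0)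
    (hg : IntervalIntegrable g volume a a')
    (hgc : IntervalIntegrable (fun x => g x * logb b (c * g x)) volume a a') :
    -∫ x in a..a', g x * logb b (g x) =
      logb b c * (∫ x in a..a', g x) - ∫ x in a..a', g x * logb b (c * g x) := by
  have hsplit : ∀ x, g x * logb b (g x) = g x * logb b (c * g x) - logb b c * g x :=
    fun x => by rw [mul_logb_const_mul hc]; ring
  simp_rw [hsplit]
  rw [intervalIntegral.integral_sub hgc (hg.const_mul _), intervalIntegral.integral_const_mul]
  ring

end Entropy

-- The density of harmonic measure of the unit disc seen from `w`, in the angle variable.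
noncomputable def poissonDensity (w : ℂ) (φ : ℝ) : ℝ :=
  (2 * π)⁻¹ * poissonKernel 0 w (circleMap 0 1 φ)

section PoissonDensity

open Real

variable {w : ℂ}

theorem continuous_poissonDensity (hw : ‖w‖ < 1) : Continuous (poissonDensity w) :=
  continuous_const.mul (continuous_poissonKernel_zero_circleMap hw)

theorem poissonDensity_pos (hw : ‖w‖ < 1) (φ : ℝ) : 0 < poissonDensity w φ :=
  mul_pos (by positivity) (poissonKernel_zero_circleMap_pos hw φ)

theorem integral_poissonDensity (hw : ‖w‖ < 1) : ∫ φ in (-π)..π, poissonDensity w φ = 1 := by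
  simp only [poissonDensity]
  rw [intervalIntegral.integral_const_mul,
    integral_circleMap_eq_two_pi_smul_circleAverage (poissonKernel 0 w),
    circleAverage_poissonKernel (mem_ball_zero_iff.mpr hw), smul_eq_mul]
  field_simp

theorem integral_poissonDensity_mul_logb_two_pi_mul (hw : ‖w‖ < 1) (b : ℝ) :
    ∫ φ in (-π)..π, poissonDensity w φ * logb b (2 * π * poissonDensity w φ) =
      -logb b (1 - ‖w‖ ^ 2) := by
  set P := poissonKernel 0 w
  have hlog : ∀ φ, poissonDensity w φ * logb b (2 * π * poissonDensity w φ) =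
      (2 * π)⁻¹ * (log b)⁻¹ * (P (circleMap 0 1 φ) * log (P (circleMap 0 1 φ))) := fun φ => by
    rw [poissonDensity, mul_inv_cancel_left₀ (by positivity), logb]; ring
  simp_rw [hlog]
  rw [intervalIntegral.integral_const_mul,
    integral_circleMap_eq_two_pi_smul_circleAverage (fun z => P z * log (P z)),
    circleAverage_poissonKernel_mul_log hw, logb, smul_eq_mul]
  field_simp

theorem neg_integral_poissonDensity_mul_logb (hw : ‖w‖ < 1) (b : ℝ) :
    -∫ φ in (-π)..π, poissonDensity w φ * logb b (poissonDensity w φ) =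
      logb b (2 * π * (1 - ‖w‖ ^ 2)) := by
  have hcont := continuous_poissonDensity hw
  have hcont' : Continuous fun φ => poissonDensity w φ * logb b (2 * π * poissonDensity w φ) :=
    hcont.mul ((continuous_const.mul hcont).logb fun φ =>
      (mul_pos (by positivity) (poissonDensity_pos hw φ)).ne')
  have h1 : 0 < 1 - ‖w‖ ^ 2 := by nlinarith [norm_nonneg w]
  rw [neg_integral_mul_logb_eq (by positivity) (hcont.intervalIntegrable _ _)
    (hcont'.intervalIntegrable _ _), integral_poissonDensity hw,
    integral_poissonDensity_mul_logb_two_pi_mul hw, logb_mul (x := 2 * π) (by positivity) h1.ne']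
  ring

end PoissonDensity

/-- for the wrapped Cauchy density
`p_κ(φ) = (1/2π) sinh(√κ)/(cosh(√κ) − cos φ)` on `[-π, π]`, one has
`∫ p_κ log₂(2π p_κ) dφ = −log₂(1 − e^{-2√κ})`; equivalently the differential entropy is
`h(p_κ) = log₂(2π(1 − e^{-2√κ}))`. -/
theorem wrapped_cauchy_relative_entropy
    (κ : ℝ) (hκ : 0 < κ) (p : ℝ → ℝ)
    (hp : ∀ φ : ℝ, p φ =
      (1 / (2 * π)) * Real.sinh (Real.sqrt κ) / (Real.cosh (Real.sqrt κ) - Real.cos φ)) :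
    (∫ φ in (-π)..π, p φ * Real.logb 2 (2 * π * p φ)) =
      -Real.logb 2 (1 - Real.exp (-2 * Real.sqrt κ)) ∧
    (-∫ φ in (-π)..π, p φ * Real.logb 2 (p φ)) =
      Real.logb 2 (2 * π * (1 - Real.exp (-2 * Real.sqrt κ))) := by
  have hr : ‖(Real.exp (-√κ) : ℂ)‖ < 1 := by
    rw [Complex.norm_real, Real.norm_of_nonneg (Real.exp_pos _).le, Real.exp_lt_one_iff]
    simpa using Real.sqrt_pos.mpr hκ
  have hr2 : ‖(Real.exp (-√κ) : ℂ)‖ ^ 2 = Real.exp (-2 * √κ) := by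
    rw [Complex.norm_real, Real.norm_of_nonneg (Real.exp_pos _).le, ← Real.exp_nat_mul]
    ring_nf
  obtain rfl : p = poissonDensity (Real.exp (-√κ)) := funext fun φ => by
    rw [hp, mul_div_assoc, sinh_div_cosh_sub_cos_eq_poissonKernel, one_div, poissonDensity]
  rw [← hr2]
  exact ⟨integral_poissonDensity_mul_logb_two_pi_mul hr 2, neg_integral_poissonDensity_mul_logb hr 2⟩
end

section
/- As q → 0⁺, ln φ_E(q) + 2 Σ_{k=1}^{∞} (−1)^{k−1} q^{(k²+k)/2} / ( k (1 − q^k) ) = 2q − ln(1 + q) + O(q⁶), where φ_E(q) = ∏_{k=1}^{∞}(1 − q^k) is the Euler function. Equivalently, the function q ↦ ln φ_E(q) + 2 Σ_{k≥1} (−1)^{k−1} q^{(k²+k)/2}/(k(1−q^k)) − 2q + ln(1+q) is O(q⁶) as q → 0⁺. -/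
/-!
Expanding `-log (1 - q^k) = ∑ₙ q^(kn)/n` and summing over `k` first gives the Lambert series
`log φ_E(q) = -∑ₙ q^n / (n (1 - q^n))`. Both Lambert series are then split after their first
terms whose exponents stay below `6` (five for the Euler one, two for the one over the triangular
numbers `k(k+1)/2`), and `log (1 + q)` after its degree-five Taylor polynomial. The three tails
are `O(q⁶)` by geometric comparison, and the finitely many leading terms form a rational function
which is `q⁶` times a polynomial over `∏_{k ≤ 5} (1 - q^k)`.
-/

open Real Finset

/- The `n`-th terms, counted from `n = 0`, of the two Lambert series of the statement:
`q^m / (m (1 - q^m))` and `(-1)^(m-1) q^(m(m+1)/2) / (m (1 - q^m))` with `m = n + 1`. -/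

noncomputable def eulerLogTerm (q : ℝ) (n : ℕ) : ℝ :=
  q ^ (n + 1) / ((n + 1) * (1 - q ^ (n + 1)))

noncomputable def triangularTerm (q : ℝ) (k : ℕ) : ℝ :=
  (-1) ^ k * q ^ (((k + 1) ^ 2 + (k + 1)) / 2) / ((k + 1) * (1 - q ^ (k + 1)))

section Lambert

variable {q : ℝ}

lemma abs_pow_succ_lt_one (hq : |q| < 1) (k : ℕ) : |q ^ (k + 1)| < 1 := by
  rw [abs_pow]; exact pow_lt_one₀ (abs_nonneg q) hq k.succ_ne_zero

lemma summable_pow_succ_mul_succ_div (hq : |q| < 1) :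
    Summable fun p : ℕ × ℕ => q ^ ((p.1 + 1) * (p.2 + 1)) / ((p.2 : ℝ) + 1) := by
  have hgeom : Summable fun n : ℕ => ‖|q| ^ n‖ := by
    simpa using summable_geometric_of_lt_one (abs_nonneg q) hq
  refine Summable.of_norm_bounded (summable_mul_of_summable_norm hgeom hgeom) fun p => ?_
  rw [norm_div, norm_pow, Real.norm_eq_abs, ← pow_add]
  calc |q| ^ ((p.1 + 1) * (p.2 + 1)) / ‖(p.2 : ℝ) + 1‖ ≤ |q| ^ ((p.1 + 1) * (p.2 + 1)) :=
        div_le_self (by positivity) (by rw [Real.norm_eq_abs, abs_of_nonneg (by positivity)]; simp)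
    _ ≤ |q| ^ (p.1 + p.2) := pow_le_pow_of_le_one (abs_nonneg q) hq.le (by nlinarith)

lemma hasSum_log_one_sub_pow_succ (hq : |q| < 1) (k : ℕ) :
    HasSum (fun n : ℕ => q ^ ((k + 1) * (n + 1)) / ((n : ℝ) + 1)) (-log (1 - q ^ (k + 1))) := by
  simpa only [← pow_mul] using hasSum_pow_div_log_of_abs_lt_one (abs_pow_succ_lt_one hq k)

lemma hasSum_eulerLogTerm (hq : |q| < 1) (n : ℕ) :
    HasSum (fun k : ℕ => q ^ ((k + 1) * (n + 1)) / ((n : ℝ) + 1)) (eulerLogTerm q n) := by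
  have h := ((hasSum_geometric_of_abs_lt_one (abs_pow_succ_lt_one hq n)).mul_left
    (q ^ (n + 1))).div_const ((n : ℝ) + 1)
  rw [eulerLogTerm, mul_comm ((n : ℝ) + 1), ← div_div, div_eq_mul_inv (q ^ (n + 1))]
  exact h.congr_fun fun k => by rw [← pow_succ', ← pow_mul, mul_comm]

theorem log_tprod_one_sub_pow_succ (hq : |q| < 1) :
    log (∏' k : ℕ, (1 - q ^ (k + 1))) = -∑' n, eulerLogTerm q n := by
  have hF := summable_pow_succ_mul_succ_div hq
  have hlog (k : ℕ) :
      log (1 - q ^ (k + 1)) = -∑' n : ℕ, q ^ ((k + 1) * (n + 1)) / ((n : ℝ) + 1) := by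
    rw [(hasSum_log_one_sub_pow_succ hq k).tsum_eq, neg_neg]
  have hpos (k : ℕ) : 0 < 1 - q ^ (k + 1) := by
    linarith [(abs_lt.1 (abs_pow_succ_lt_one hq k)).2]
  have hsum : Summable fun k : ℕ => log (1 - q ^ (k + 1)) := by
    simp_rw [hlog]; exact hF.prod.neg
  rw [← rexp_tsum_eq_tprod hpos hsum, log_exp, tsum_congr hlog, tsum_neg,
    ← hF.tsum_comm, tsum_congr fun n => (hasSum_eulerLogTerm hq n).tsum_eq]

end Lambert

lemma abs_tsum_le_of_abs_le_geometric {f : ℕ → ℝ} {c r : ℝ} (hr0 : 0 ≤ r) (hr1 : r < 1)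
    (hf : ∀ k, |f k| ≤ c * r ^ k) : |∑' k, f k| ≤ c / (1 - r) := by
  simpa [div_eq_mul_inv] using
    tsum_of_norm_bounded ((hasSum_geometric_of_lt_one hr0 hr1).mul_left c) (f := f) hf

section SmallQ

variable {q : ℝ}

lemma half_le_one_sub_pow_succ (hq : |q| ≤ 1 / 2) (k : ℕ) : 1 / 2 ≤ 1 - q ^ (k + 1) := by
  have : q ^ (k + 1) ≤ |q| := (le_abs_self _).trans <| by
    rw [abs_pow]; exact pow_le_of_le_one (abs_nonneg q) (by linarith) k.succ_ne_zero
  linarith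

lemma abs_pow_div_succ_mul_one_sub_pow_le (hq : |q| ≤ 1 / 2) (e k : ℕ) :
    |q ^ e / ((k + 1) * (1 - q ^ (k + 1)))| ≤ 2 * |q| ^ e := by
  have hden : 1 / 2 ≤ ((k : ℝ) + 1) * (1 - q ^ (k + 1)) := by
    nlinarith [half_le_one_sub_pow_succ hq k, k.cast_nonneg (α := ℝ)]
  rw [abs_div, abs_pow, abs_of_pos (a := ((k : ℝ) + 1) * _) (by linarith)]
  calc |q| ^ e / (((k : ℝ) + 1) * (1 - q ^ (k + 1))) ≤ |q| ^ e / (1 / 2) :=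
        div_le_div_of_nonneg_left (by positivity) (by norm_num) hden
    _ = 2 * |q| ^ e := by ring

lemma abs_eulerLogTerm_le (hq : |q| ≤ 1 / 2) (n : ℕ) :
    |eulerLogTerm q n| ≤ 2 * |q| ^ (n + 1) :=
  abs_pow_div_succ_mul_one_sub_pow_le hq _ _

lemma abs_triangularTerm_le (hq : |q| ≤ 1 / 2) (k : ℕ) :
    |triangularTerm q k| ≤ 2 * |q| ^ (((k + 1) ^ 2 + (k + 1)) / 2) := by
  rw [triangularTerm, mul_div_assoc, abs_mul, abs_neg_one_pow, one_mul]
  exact abs_pow_div_succ_mul_one_sub_pow_le hq _ _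

lemma add_triangle_le_triangle_add (k N : ℕ) :
    k + ((N + 1) ^ 2 + (N + 1)) / 2 ≤ ((k + N + 1) ^ 2 + (k + N + 1)) / 2 := by
  have : (N + 1) ^ 2 + (N + 1) + 2 * k ≤ (k + N + 1) ^ 2 + (k + N + 1) := by nlinarith
  omega

lemma abs_tsum_eulerLogTerm_nat_add_le (hq : |q| ≤ 1 / 2) (N : ℕ) :
    |∑' n, eulerLogTerm q (n + N)| ≤ 4 * |q| ^ (N + 1) := by
  refine (abs_tsum_le_of_abs_le_geometric (abs_nonneg q) (by linarith)
    (c := 2 * |q| ^ (N + 1)) fun n => ?_).trans ?_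
  · calc |eulerLogTerm q (n + N)| ≤ 2 * |q| ^ (n + N + 1) := abs_eulerLogTerm_le hq _
      _ = 2 * |q| ^ (N + 1) * |q| ^ n := by ring
  · rw [div_le_iff₀ (by linarith)]
    nlinarith [pow_nonneg (abs_nonneg q) (N + 1)]

lemma abs_tsum_triangularTerm_nat_add_le (hq : |q| ≤ 1 / 2) (N : ℕ) :
    |∑' k, triangularTerm q (k + N)| ≤ 4 * |q| ^ (((N + 1) ^ 2 + (N + 1)) / 2) := by
  refine (abs_tsum_le_of_abs_le_geometric (abs_nonneg q) (by linarith)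
    (c := 2 * |q| ^ (((N + 1) ^ 2 + (N + 1)) / 2)) fun k => ?_).trans ?_
  · calc |triangularTerm q (k + N)| ≤ 2 * |q| ^ (((k + N + 1) ^ 2 + (k + N + 1)) / 2) :=
          abs_triangularTerm_le hq _
      _ ≤ 2 * |q| ^ (k + ((N + 1) ^ 2 + (N + 1)) / 2) := by
          gcongr 2 * ?_
          exact pow_le_pow_of_le_one (abs_nonneg q) (by linarith) (add_triangle_le_triangle_add k N)
      _ = 2 * |q| ^ (((N + 1) ^ 2 + (N + 1)) / 2) * |q| ^ k := by ring
  · rw [div_le_iff₀ (by linarith)]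
    nlinarith [pow_nonneg (abs_nonneg q) (((N + 1) ^ 2 + (N + 1)) / 2)]

lemma summable_eulerLogTerm (hq : |q| ≤ 1 / 2) : Summable (eulerLogTerm q) :=
  .of_norm_bounded ((summable_geometric_of_lt_one (abs_nonneg q) (by linarith)).mul_left 2)
    fun n => (abs_eulerLogTerm_le hq n).trans <| by
      gcongr 2 * ?_; exact pow_le_pow_of_le_one (abs_nonneg q) (by linarith) n.le_succ

lemma summable_triangularTerm (hq : |q| ≤ 1 / 2) : Summable (triangularTerm q) :=
  .of_norm_bounded ((summable_geometric_of_lt_one (abs_nonneg q) (by linarith)).mul_left 2)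
    fun k => (abs_triangularTerm_le hq k).trans <| by
      gcongr 2 * ?_
      refine pow_le_pow_of_le_one (abs_nonneg q) (by linarith) ?_
      have : 2 * k ≤ (k + 1) ^ 2 + (k + 1) := by nlinarith
      omega

lemma abs_log_one_add_add_sum_range_le (hq : |q| ≤ 1 / 2) (n : ℕ) :
    |log (1 + q) + ∑ i ∈ range n, (-q) ^ (i + 1) / (i + 1)| ≤ 2 * |q| ^ (n + 1) := by
  have h := abs_log_sub_add_sum_range_le (x := -q) (by rw [abs_neg]; linarith) n
  rw [sub_neg_eq_add, add_comm, abs_neg] at h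
  refine h.trans ?_
  rw [div_le_iff₀ (by linarith)]
  nlinarith [pow_nonneg (abs_nonneg q) (n + 1)]

lemma abs_leading_terms_le (hq : |q| ≤ 1 / 2) :
    |-(∑ n ∈ range 5, eulerLogTerm q n) + 2 * ∑ k ∈ range 2, triangularTerm q k - 2 * q
      - ∑ i ∈ range 5, (-q) ^ (i + 1) / (i + 1)| ≤ 192 * |q| ^ 6 := by
  have hd : (1 / 2) ^ 5 ≤ ∏ k ∈ range 5, (1 - q ^ (k + 1)) := by
    simpa using prod_le_prod (s := range 5) (f := fun _ => (1 / 2 : ℝ)) (by norm_num)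
      fun k _ => half_le_one_sub_pow_succ hq k
  obtain ⟨N, hN, hH⟩ : ∃ N : ℝ, |N| ≤ 6 ∧
      -(∑ n ∈ range 5, eulerLogTerm q n) + 2 * ∑ k ∈ range 2, triangularTerm q k - 2 * q
        - ∑ i ∈ range 5, (-q) ^ (i + 1) / (i + 1)
        = q ^ 6 * N / ∏ k ∈ range 5, (1 - q ^ (k + 1)) := by
    refine ⟨(10 - 10 * q + 5 * q ^ 2 - 35 * q ^ 3 + 23 * q ^ 4 + 12 * q ^ 5 - 13 * q ^ 6
      + 30 * q ^ 7 + 20 * q ^ 8 - 59 * q ^ 9 - 10 * q ^ 10 + 35 * q ^ 11 - 23 * q ^ 12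
      + 27 * q ^ 13 - 12 * q ^ 14) / 60, ?_, ?_⟩
    · have hpow (i : ℕ) : -1 ≤ q ^ i ∧ q ^ i ≤ 1 :=
        abs_le.1 (by rw [abs_pow]; exact pow_le_one₀ (abs_nonneg q) (by linarith))
      rw [abs_le]
      constructor <;> linarith [hpow 1, hpow 2, hpow 3, hpow 4, hpow 5, hpow 6, hpow 7, hpow 8,
        hpow 9, hpow 10, hpow 11, hpow 12, hpow 13, hpow 14]
    · have hne (k : ℕ) : 1 - q ^ (k + 1) ≠ 0 := by linarith [half_le_one_sub_pow_succ hq k]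
      have := hne 0; have := hne 1; have := hne 2; have := hne 3; have := hne 4
      norm_num [sum_range_succ, prod_range_succ, eulerLogTerm, triangularTerm] at *
      field_simp
      ring
  rw [hH, abs_div, abs_mul, abs_pow, abs_of_pos (by linarith : (0 : ℝ) < ∏ k ∈ range 5, _)]
  calc |q| ^ 6 * |N| / ∏ k ∈ range 5, (1 - q ^ (k + 1)) ≤ |q| ^ 6 * 6 / (1 / 2) ^ 5 := by
        gcongr
    _ = 192 * |q| ^ 6 := by ring

end SmallQ

/-- as `q → 0⁺`,
`ln φ_E(q) + 2 Σ_{k≥1} (−1)^{k−1} q^{(k²+k)/2}/(k(1−q^k)) − 2q + ln(1+q) = O(q⁶)`,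
where `φ_E(q) = ∏_{k≥1}(1 − q^k)` is the Euler function. -/
theorem euler_function_series_small_q_expansion :
    ∃ C δ : ℝ, 0 < C ∧ 0 < δ ∧ ∀ q : ℝ, 0 < q → q < δ →
      |Real.log (∏' k : ℕ, (1 - q ^ (k + 1))) +
          2 * ∑' k : ℕ,
            (-1 : ℝ) ^ k * q ^ (((k + 1) ^ 2 + (k + 1)) / 2) /
              (((k : ℝ) + 1) * (1 - q ^ (k + 1))) -
          2 * q + Real.log (1 + q)| ≤ C * q ^ 6 := by
  refine ⟨206, 1 / 2, by norm_num, by norm_num, fun q hq0 hq => ?_⟩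
  have hq' : |q| ≤ 1 / 2 := by rw [abs_of_pos hq0]; exact hq.le
  change |log _ + 2 * ∑' k, triangularTerm q k - 2 * q + log (1 + q)| ≤ _
  rw [log_tprod_one_sub_pow_succ (by linarith),
    ← (summable_eulerLogTerm hq').sum_add_tsum_nat_add 5,
    ← (summable_triangularTerm hq').sum_add_tsum_nat_add 2]
  have hhead := abs_le.1 (abs_leading_terms_le hq')
  have htailE := abs_le.1 (abs_tsum_eulerLogTerm_nat_add_le hq' 5)
  have htailT := abs_le.1 (abs_tsum_triangularTerm_nat_add_le hq' 2)
  have hlog := abs_le.1 (abs_log_one_add_add_sum_range_le hq' 5)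
  norm_num only [abs_of_pos hq0] at hhead htailE htailT hlog
  rw [abs_le]
  constructor <;> linarith
end
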